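/- arXiv:1101.4176 — 5 statements merged into one kernel-verified Lean document; each statement's English description precedes it below -/
import Mathlib

section
/- Let {Ω_i}_{i∈ℕ} be a countable system of closed sets in ℝⁿ with x̄ ∈ ∩_{i=1}^∞ Ω_i. Assume the system is tangentially extremal at x̄, i.e., there exists a bounded sequence {a_i}_{i∈ℕ} ⊂ ℝⁿ such that ∩_{i=1}^∞ [T(x̄;Ω_i) − a_i] = ∅, and assume the nonoverlapping condition ∩_{i=1}^∞ T(x̄;Ω_i) = {0}. Then there exist vectors x*_i ∈ N(0; T(x̄;Ω_i)) (hence x*_i ∈ N(x̄;Ω_i)) for all i ∈ ℕ satisfying Σ_{i=1}^∞ 2^{−i} x*_i = 0 and Σ_{i=1}^∞ 2^{−i} ‖x*_i‖² = 1. -/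
open Filter Topology Set Metric

section Defs
variable {E : Type*} [NormedAddCommGroup E] [NormedSpace ℝ E]

/-- Bouligand–Severi contingent tangent cone. -/
def tcone (Ω : Set E) (x : E) : Set E :=
  {v | ∃ (t : ℕ → ℝ) (w : ℕ → E), (∀ k, 0 < t k) ∧
    Tendsto t atTop (nhds 0) ∧ Tendsto w atTop (nhds v) ∧ ∀ k, x + t k • w k ∈ Ω}
end Defs

section Defs2
variable {E F : Type*} [NormedAddCommGroup E] [InnerProductSpace ℝ E]
  [NormedAddCommGroup F] [InnerProductSpace ℝ F]

/-- Fréchet (regular/pre-) normal cone. -/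
def fnormal (Ω : Set E) (x : E) : Set E :=
  {v | ∀ ε > 0, ∃ δ > 0, ∀ u ∈ Ω, ‖u - x‖ < δ → (inner ℝ v (u - x) : ℝ) ≤ ε * ‖u - x‖}

/-- Limiting (Mordukhovich) normal cone. -/
def lnormal (Ω : Set E) (x : E) : Set E :=
  {v | ∃ xk vk : ℕ → E, (∀ k, xk k ∈ Ω) ∧ (∀ k, vk k ∈ fnormal Ω (xk k)) ∧
    Tendsto xk atTop (nhds x) ∧ Tendsto vk atTop (nhds v)}

/-- Normal cone of convex analysis. -/
def cnormal (Ω : Set E) (x : E) : Set E :=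
  {v | ∀ y ∈ Ω, (inner ℝ v (y - x) : ℝ) ≤ 0}

/-- All finite sums `∑_{i ∈ I} xᵢ` with `xᵢ ∈ Nc i`. -/
def finSums (Nc : ℕ → Set E) : Set E :=
  {v | ∃ (I : Finset ℕ) (xs : ℕ → E), (∀ i ∈ I, xs i ∈ Nc i) ∧ v = ∑ i ∈ I, xs i}

/-- Fréchet normal cone in a product of inner product spaces
(equivalently, w.r.t. the Euclidean product structure). -/
def fnormalP (Ω : Set (E × F)) (z : E × F) : Set (E × F) :=
  {v | ∀ ε > 0, ∃ δ > 0, ∀ u ∈ Ω, ‖u - z‖ < δ →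
    (inner ℝ v.1 (u.1 - z.1) : ℝ) + (inner ℝ v.2 (u.2 - z.2) : ℝ) ≤ ε * ‖u - z‖}

/-- Limiting normal cone in a product of inner product spaces. -/
def lnormalP (Ω : Set (E × F)) (z : E × F) : Set (E × F) :=
  {v | ∃ zk vk : ℕ → E × F, (∀ k, zk k ∈ Ω) ∧ (∀ k, vk k ∈ fnormalP Ω (zk k)) ∧
    Tendsto zk atTop (nhds z) ∧ Tendsto vk atTop (nhds v)}

/-- Epigraph of an extended-real-valued function. -/
def epiSet (φ : E → EReal) : Set (E × ℝ) := {p | φ p.1 ≤ (p.2 : EReal)}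

/-- Basic (limiting, Mordukhovich) subdifferential. -/
noncomputable def bsub (φ : E → EReal) (x : E) : Set E :=
  {v | (v, (-1 : ℝ)) ∈ lnormalP (epiSet φ) (x, (φ x).toReal)}

/-- Singular subdifferential. -/
noncomputable def ssub (φ : E → EReal) (x : E) : Set E :=
  {v | (v, (0 : ℝ)) ∈ lnormalP (epiSet φ) (x, (φ x).toReal)}

/-- Fréchet subdifferential. -/
def fsub (φ : E → EReal) (x : E) : Set E :=
  {v | ∀ ε > 0, ∃ δ > 0, ∀ u, ‖u - x‖ < δ →
    φ x + (((inner ℝ v (u - x) : ℝ) - ε * ‖u - x‖ : ℝ) : EReal) ≤ φ u}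

/-- Fréchet upper subdifferential `∂̂⁺φ(x) = −∂̂(−φ)(x)`. -/
def fsubUpper (φ : E → EReal) (x : E) : Set E := {v | -v ∈ fsub (fun u => -(φ u)) x}
end Defs2

/-! Write `Tᵢ = T(x̄;Ωᵢ)`, `Λᵢ = Tᵢ - aᵢ` and `ψ x = ∑ 2⁻⁽ⁱ⁺¹⁾ d(x, Λᵢ)²`. Since `‖aᵢ‖ ≤ M` and
`d(·, Tᵢ)` is positively homogeneous, `ψ x ≥ c ‖x‖² / 2 - M²` with `c > 0` the minimum of
`∑ 2⁻⁽ⁱ⁺¹⁾ d(·, Tᵢ)²` on the unit sphere, which is positive because the cones only meet at `0`.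
So `ψ` attains its minimum at some `x`, and `ψ x > 0` because the `Λᵢ` do not intersect.
Moving `x` while keeping nearest points `wᵢ ∈ Λᵢ` fixed shows that the proximal normals
`x - wᵢ` balance: `∑ 2⁻⁽ⁱ⁺¹⁾ (x - wᵢ) = 0`; dividing by `√(ψ x)` normalises them.

A Fréchet normal to the cone `Tᵢ` at one of its points `p` is a limiting normal to `Tᵢ` at `0`
(approach `0` along `p / k`), and a limiting normal to `Ωᵢ` at `x̄`: if `x̄ + tₖ wₖ ∈ Ω` with
`wₖ → p`, the proximal normals of `Ω` at nearest points to `x̄ + tₖ (p + γ v)` converge, after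
rescaling, to a limiting normal within `O(ε)` of `v`. -/

open scoped Pointwise

theorem mem_closure_prod_iff_exists_seq {X Y : Type*} [TopologicalSpace X] [TopologicalSpace Y]
    [FirstCountableTopology X] [FirstCountableTopology Y] {S : Set (X × Y)} {a : X} {b : Y} :
    (a, b) ∈ closure S ↔ ∃ (f : ℕ → X) (g : ℕ → Y), (∀ k, (f k, g k) ∈ S) ∧
      Tendsto f atTop (𝓝 a) ∧ Tendsto g atTop (𝓝 b) := by
  rw [mem_closure_iff_seq_limit]
  constructor
  · rintro ⟨s, hs, hlim⟩
    exact ⟨fun k => (s k).1, fun k => (s k).2, hs, (Prod.tendsto_iff _ _).1 hlim⟩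
  · rintro ⟨f, g, hS, hf, hg⟩
    exact ⟨fun k => (f k, g k), hS, hf.prodMk_nhds hg⟩

section TangentCone

variable {E : Type*} [NormedAddCommGroup E] [NormedSpace ℝ E] {Ω : Set E} {x : E}

theorem tcone_eq_preimage_closure (Ω : Set E) (x : E) :
    tcone Ω x = (fun v => ((0 : ℝ), v)) ⁻¹' closure {p : ℝ × E | 0 < p.1 ∧ x + p.1 • p.2 ∈ Ω} := by
  ext v
  simp only [tcone, mem_preimage, mem_closure_prod_iff_exists_seq, mem_ofPred_eq, forall_and]
  tauto

theorem isClosed_tcone (Ω : Set E) (x : E) : IsClosed (tcone Ω x) := by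
  rw [tcone_eq_preimage_closure]
  exact isClosed_closure.preimage (by fun_prop)

theorem zero_mem_tcone (hx : x ∈ Ω) : (0 : E) ∈ tcone Ω x :=
  ⟨fun k => 1 / (k + 1), fun _ => 0, fun k => by positivity,
    tendsto_one_div_add_atTop_nhds_zero_nat, tendsto_const_nhds, fun k => by simpa using hx⟩

theorem smul_mem_tcone {v : E} (hv : v ∈ tcone Ω x) {r : ℝ} (hr : 0 < r) :
    r • v ∈ tcone Ω x := by
  obtain ⟨t, w, ht, ht0, hw, hmem⟩ := hv
  refine ⟨fun k => t k / r, fun k => r • w k, fun k => div_pos (ht k) hr,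
    by simpa using ht0.div_const r, hw.const_smul r, fun k => ?_⟩
  rw [smul_smul, div_mul_cancel₀ _ hr.ne']
  exact hmem k

theorem smul_tcone {r : ℝ} (hr : 0 < r) : r • tcone Ω x = tcone Ω x := by
  refine (smul_set_subset_iff.2 fun v hv => smul_mem_tcone hv hr).antisymm fun v hv => ?_
  rw [mem_smul_set_iff_inv_smul_mem₀ hr.ne']
  exact smul_mem_tcone hv (inv_pos.2 hr)

end TangentCone

section Normals

variable {E : Type*} [NormedAddCommGroup E] [InnerProductSpace ℝ E] {Ω : Set E} {x v : E}

theorem lnormal_eq_preimage_closure (Ω : Set E) (x : E) :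
    lnormal Ω x = (fun v => (x, v)) ⁻¹' closure {p : E × E | p.1 ∈ Ω ∧ p.2 ∈ fnormal Ω p.1} := by
  ext v
  simp only [lnormal, mem_preimage, mem_closure_prod_iff_exists_seq, mem_ofPred_eq, forall_and]
  tauto

theorem isClosed_lnormal (Ω : Set E) (x : E) : IsClosed (lnormal Ω x) := by
  rw [lnormal_eq_preimage_closure]
  exact isClosed_closure.preimage (by fun_prop)

theorem smul_mem_fnormal (hv : v ∈ fnormal Ω x) {c : ℝ} (hc : 0 < c) : c • v ∈ fnormal Ω x := by
  intro ε hε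
  obtain ⟨δ, hδ, h⟩ := hv (ε / c) (by positivity)
  refine ⟨δ, hδ, fun u hu hd => ?_⟩
  rw [real_inner_smul_left]
  calc c * inner ℝ v (u - x) ≤ c * (ε / c * ‖u - x‖) := by gcongr; exact h u hu hd
    _ = ε * ‖u - x‖ := by field_simp

theorem smul_mem_lnormal (hv : v ∈ lnormal Ω x) {c : ℝ} (hc : 0 < c) : c • v ∈ lnormal Ω x := by
  obtain ⟨xk, vk, hxk, hvk, hx, hv⟩ := hv
  exact ⟨xk, fun k => c • vk k, hxk, fun k => smul_mem_fnormal (hvk k) hc, hx, hv.const_smul c⟩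

theorem mem_fnormal_smul (hv : v ∈ fnormal Ω x) {r : ℝ} (hr : 0 < r) :
    v ∈ fnormal (r • Ω) (r • x) := by
  intro ε hε
  obtain ⟨δ, hδ, h⟩ := hv ε hε
  refine ⟨r * δ, by positivity, ?_⟩
  rintro _ ⟨u, hu, rfl⟩ hd
  have hnorm : ‖r • u - r • x‖ = r * ‖u - x‖ := by
    rw [← smul_sub, norm_smul, Real.norm_of_nonneg hr.le]
  rw [hnorm] at hd ⊢
  rw [← smul_sub, real_inner_smul_right]
  nlinarith [h u hu (lt_of_mul_lt_mul_left hd hr.le)]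

theorem mem_fnormal_of_mem_fnormal_image_sub {a : E} (hv : v ∈ fnormal ((· - a) '' Ω) (x - a)) :
    v ∈ fnormal Ω x := by
  intro ε hε
  obtain ⟨δ, hδ, h⟩ := hv ε hε
  refine ⟨δ, hδ, fun u hu hd => ?_⟩
  have hsub : u - a - (x - a) = u - x := sub_sub_sub_cancel_right u x a
  simpa only [hsub] using h (u - a) ⟨u, hu, rfl⟩ (by rwa [hsub])

theorem sub_mem_fnormal_of_isMinOn {z : E} (h : IsMinOn (dist z) Ω x) : z - x ∈ fnormal Ω x := by
  intro ε hε
  refine ⟨2 * ε, by positivity, fun u hu hd => ?_⟩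
  have hle : ‖z - x‖ ^ 2 ≤ ‖(z - x) - (u - x)‖ ^ 2 := by
    rw [sub_sub_sub_cancel_right, ← dist_eq_norm, ← dist_eq_norm]
    gcongr
    exact h hu
  rw [norm_sub_sq_real (z - x) (u - x)] at hle
  nlinarith [norm_nonneg (u - x)]

theorem norm_le_of_norm_add_smul_le {d v : E} {γ ε : ℝ} (hγ : 0 < γ) (hε : 0 ≤ ε)
    (h : ‖d + γ • v‖ ≤ γ * ‖v‖) (hv : inner ℝ v (-d) ≤ ε * ‖d‖) : ‖d‖ ≤ 2 * γ * ε := by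
  have hsq : ‖d + γ • v‖ ^ 2 ≤ (γ * ‖v‖) ^ 2 := by gcongr
  rw [norm_add_sq_real, real_inner_smul_right, norm_smul, Real.norm_of_nonneg hγ.le,
    real_inner_comm] at hsq
  rw [inner_neg_right] at hv
  have hsq' : ‖d‖ * ‖d‖ ≤ 2 * γ * ε * ‖d‖ := by
    nlinarith [mul_le_mul_of_nonneg_left hv (by positivity : (0 : ℝ) ≤ 2 * γ)]
  rcases (norm_nonneg d).eq_or_lt with hd | hd
  · rw [← hd]; positivity
  · exact le_of_mul_le_mul_right hsq' hd

theorem mem_lnormal_zero_of_mem_fnormal {T : Set E} (hT : ∀ r : ℝ, 0 < r → r • T = T)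
    {p : E} (hp : p ∈ T) (hv : v ∈ fnormal T p) : v ∈ lnormal T 0 := by
  have hr : ∀ k : ℕ, (0 : ℝ) < 1 / (k + 1) := fun k => by positivity
  refine ⟨fun k => (1 / (k + 1) : ℝ) • p, fun _ => v, fun k => ?_, fun k => ?_, ?_,
    tendsto_const_nhds⟩
  · rw [← hT _ (hr k)]
    exact smul_mem_smul_set hp
  · simpa only [hT _ (hr k)] using mem_fnormal_smul hv (hr k)
  · simpa using (tendsto_one_div_add_atTop_nhds_zero_nat (𝕜 := ℝ)).smul_const p

end Normals

section TangentNormals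

variable {E : Type*} [NormedAddCommGroup E] [InnerProductSpace ℝ E] [ProperSpace E]
  {Ω : Set E} {x : E}

/-- A nearest point to `y` in the blow-up `t⁻¹ • (Ω - x)`, with its proximal normal. -/
theorem exists_nearest_in_blowup (hΩ : IsClosed Ω) (hx : x ∈ Ω) {t : ℝ} (ht : 0 < t) (y : E) :
    ∃ q, x + t • q ∈ Ω ∧ y - q ∈ fnormal Ω (x + t • q) ∧
      ∀ w, x + t • w ∈ Ω → ‖y - q‖ ≤ ‖y - w‖ := by
  obtain ⟨u, hu, hdist⟩ := hΩ.exists_infDist_eq_dist ⟨x, hx⟩ (x + t • y)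
  obtain ⟨q, rfl⟩ : ∃ q, x + t • q = u :=
    ⟨t⁻¹ • (u - x), by rw [smul_smul, mul_inv_cancel₀ ht.ne', one_smul, add_sub_cancel]⟩
  have hscale : ∀ w, dist (x + t • y) (x + t • w) = t * ‖y - w‖ := fun w => by
    rw [dist_eq_norm, add_sub_add_left_eq_sub, ← smul_sub, norm_smul, Real.norm_of_nonneg ht.le]
  refine ⟨q, hu, ?_, fun w hw => ?_⟩
  · have hmin : IsMinOn (dist (x + t • y)) Ω (x + t • q) :=
      isMinOn_iff.2 fun w hw => hdist ▸ infDist_le_dist_of_mem hw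
    have hnormal := smul_mem_fnormal (sub_mem_fnormal_of_isMinOn hmin) (inv_pos.2 ht)
    rwa [add_sub_add_left_eq_sub, ← smul_sub, smul_smul, inv_mul_cancel₀ ht.ne',
      one_smul] at hnormal
  · have hle := hdist ▸ infDist_le_dist_of_mem (x := x + t • y) hw
    rw [hscale, hscale] at hle
    exact le_of_mul_le_mul_left hle ht

theorem exists_mem_tcone_sub_mem_lnormal (hΩ : IsClosed Ω) (hx : x ∈ Ω) {p : E}
    (hp : p ∈ tcone Ω x) (y : E) :
    ∃ q ∈ tcone Ω x, ‖y - q‖ ≤ ‖y - p‖ ∧ y - q ∈ lnormal Ω x := by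
  obtain ⟨t, w, ht, ht0, hw, hmem⟩ := hp
  choose q hqΩ hqn hqle using fun k => exists_nearest_in_blowup hΩ hx (ht k) y
  have hq_le : ∀ k, ‖y - q k‖ ≤ ‖y - w k‖ := fun k => hqle k (w k) (hmem k)
  obtain ⟨W, hW⟩ := (hw.const_sub y).norm.bddAbove_range
  have hq_bdd : ∀ k, q k ∈ closedBall y W := fun k => by
    rw [mem_closedBall, dist_comm, dist_eq_norm]
    exact (hq_le k).trans (hW ⟨k, rfl⟩)
  obtain ⟨q₀, -, φ, hφ, hqφ⟩ := tendsto_subseq_of_bounded isBounded_closedBall hq_bdd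
  have htφ := ht0.comp hφ.tendsto_atTop
  refine ⟨q₀, ⟨t ∘ φ, q ∘ φ, fun j => ht _, htφ, hqφ, fun j => hqΩ _⟩, ?_,
    ⟨fun j => x + t (φ j) • q (φ j), fun j => y - q (φ j), fun j => hqΩ _, fun j => hqn _,
      ?_, hqφ.const_sub y⟩⟩
  · exact le_of_tendsto_of_tendsto' (hqφ.const_sub y).norm
      ((hw.comp hφ.tendsto_atTop).const_sub y).norm fun j => hq_le _
  · simpa using tendsto_const_nhds.add (htφ.smul hqφ)

theorem exists_lnormal_near_of_mem_fnormal_tcone (hΩ : IsClosed Ω) (hx : x ∈ Ω) {p v : E}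
    (hp : p ∈ tcone Ω x) (hv : v ∈ fnormal (tcone Ω x) p) {ε : ℝ} (hε : 0 < ε) :
    ∃ v' ∈ lnormal Ω x, ‖v' - v‖ ≤ 2 * ε := by
  obtain ⟨δ, hδ, hδv⟩ := hv ε hε
  set γ := δ / (2 * ‖v‖ + 1)
  have hγ : 0 < γ := by positivity
  have hγδ : 2 * γ * ‖v‖ < δ := by
    have hγv : γ * (2 * ‖v‖ + 1) = δ := div_mul_cancel₀ δ (by positivity)
    nlinarith
  obtain ⟨q, hq, hqp, hqn⟩ := exists_mem_tcone_sub_mem_lnormal hΩ hx hp (p + γ • v)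
  rw [add_sub_cancel_left, norm_smul, Real.norm_of_nonneg hγ.le] at hqp
  have hpq : p + γ • v - q = (p - q) + γ • v := by abel
  rw [hpq] at hqp hqn
  have hclose : ‖q - p‖ < δ := calc
    ‖q - p‖ = ‖-((p - q) + γ • v) + γ • v‖ := by congr 1; abel
    _ ≤ γ * ‖v‖ + γ * ‖v‖ := by
      grw [norm_add_le, norm_neg, hqp, norm_smul, Real.norm_of_nonneg hγ.le]
    _ < δ := by linarith
  have hd := norm_le_of_norm_add_smul_le hγ hε.le hqp
    (by simpa only [neg_sub, norm_sub_rev] using hδv q hq hclose)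
  refine ⟨γ⁻¹ • ((p - q) + γ • v), smul_mem_lnormal hqn (inv_pos.2 hγ), ?_⟩
  rw [smul_add, smul_smul, inv_mul_cancel₀ hγ.ne', one_smul, add_sub_cancel_right, norm_smul,
    Real.norm_of_nonneg (inv_pos.2 hγ).le]
  calc γ⁻¹ * ‖p - q‖ ≤ γ⁻¹ * (2 * γ * ε) := by gcongr
    _ = 2 * ε := by field_simp

theorem mem_lnormal_of_mem_fnormal_tcone (hΩ : IsClosed Ω) (hx : x ∈ Ω) {p v : E}
    (hp : p ∈ tcone Ω x) (hv : v ∈ fnormal (tcone Ω x) p) : v ∈ lnormal Ω x := by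
  rw [← (isClosed_lnormal Ω x).closure_eq, Metric.mem_closure_iff]
  intro ε hε
  obtain ⟨v', hv', hdist⟩ := exists_lnormal_near_of_mem_fnormal_tcone hΩ hx hp hv
    (half_pos (half_pos hε))
  exact ⟨v', hv', by rw [dist_comm, dist_eq_norm]; linarith⟩

end TangentNormals

noncomputable def weightedDistSq {E : Type*} [PseudoMetricSpace E] (g : ℕ → ℝ) (S : ℕ → Set E)
    (x : E) : ℝ :=
  ∑' i, g i * infDist x (S i) ^ 2

section WeightedDistSq

variable {E : Type*} [NormedAddCommGroup E] {g : ℕ → ℝ} {S : ℕ → Set E} {M : ℝ}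

theorem infDist_le_norm_add {s : Set E} (hs : ∃ y ∈ s, ‖y‖ ≤ M) (x : E) :
    infDist x s ≤ ‖x‖ + M := by
  obtain ⟨y, hy, hyM⟩ := hs
  calc infDist x s ≤ dist x y := infDist_le_dist_of_mem hy
    _ ≤ ‖x‖ + M := by grw [dist_le_norm_add_norm, hyM]

theorem infDist_le_infDist_image_sub_add {s : Set E} {a : E} (ha : ‖a‖ ≤ M) (x : E) :
    infDist x s ≤ infDist x ((· - a) '' s) + M := by
  have hiso : Isometry (· - a : E → E) := (IsometryEquiv.subRight a).isometry
  rw [← add_sub_cancel_right x a, infDist_image hiso, add_sub_cancel_right]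
  grw [infDist_le_infDist_add_dist (y := x + a), dist_self_add_right, ha]

theorem mul_infDist_sq_le (hg : ∀ i, 0 ≤ g i) (hS : ∀ i, ∃ y ∈ S i, ‖y‖ ≤ M) {R : ℝ} {x : E}
    (hx : ‖x‖ ≤ R) (i : ℕ) : g i * infDist x (S i) ^ 2 ≤ g i * (R + M) ^ 2 := by
  gcongr
  · exact hg i
  · exact infDist_nonneg
  · grw [infDist_le_norm_add (hS i) x, hx]

theorem summable_weightedDistSq (hg : ∀ i, 0 ≤ g i) (hg' : Summable g)
    (hS : ∀ i, ∃ y ∈ S i, ‖y‖ ≤ M) (x : E) : Summable fun i => g i * infDist x (S i) ^ 2 :=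
  (hg'.mul_right _).of_nonneg_of_le (fun i => mul_nonneg (hg i) (sq_nonneg _))
    (mul_infDist_sq_le hg hS le_rfl)

theorem hasSum_weightedDistSq (hg : ∀ i, 0 ≤ g i) (hg' : Summable g)
    (hS : ∀ i, ∃ y ∈ S i, ‖y‖ ≤ M) (x : E) :
    HasSum (fun i => g i * infDist x (S i) ^ 2) (weightedDistSq g S x) :=
  (summable_weightedDistSq hg hg' hS x).hasSum

theorem hasSum_weightedDistSq_of_nearest {x : E} {w : ℕ → E} (hg : ∀ i, 0 ≤ g i)
    (hg' : Summable g) (hS : ∀ i, ∃ y ∈ S i, ‖y‖ ≤ M) (hw : ∀ i, dist x (w i) = infDist x (S i)) :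
    HasSum (fun i => g i * ‖x - w i‖ ^ 2) (weightedDistSq g S x) := by
  simpa only [← dist_eq_norm, hw] using hasSum_weightedDistSq hg hg' hS x

theorem continuous_weightedDistSq (hg : ∀ i, 0 ≤ g i) (hg' : Summable g)
    (hS : ∀ i, ∃ y ∈ S i, ‖y‖ ≤ M) : Continuous (weightedDistSq g S) := by
  refine continuous_iff_continuousAt.2 fun x => ContinuousOn.continuousAt
    (s := ball 0 (‖x‖ + 1)) ?_ (isOpen_ball.mem_nhds (by simp))
  refine continuousOn_tsum (fun i => by fun_prop) (hg'.mul_right ((‖x‖ + 1 + M) ^ 2))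
    fun i y hy => ?_
  rw [Real.norm_of_nonneg (mul_nonneg (hg i) (sq_nonneg _))]
  exact mul_infDist_sq_le hg hS (mem_ball_zero_iff.1 hy).le i

theorem weightedDistSq_pos (hg : ∀ i, 0 < g i) (hg' : Summable g)
    (hS : ∀ i, ∃ y ∈ S i, ‖y‖ ≤ M) (hSc : ∀ i, IsClosed (S i)) {x : E} (hx : x ∉ ⋂ i, S i) :
    0 < weightedDistSq g S x := by
  obtain ⟨i, hi⟩ : ∃ i, x ∉ S i := by simpa using hx
  have hne : (S i).Nonempty := let ⟨y, hy, _⟩ := hS i; ⟨y, hy⟩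
  refine (summable_weightedDistSq (fun i => (hg i).le) hg' hS x).tsum_pos
    (fun i => mul_nonneg (hg i).le (sq_nonneg _)) i ?_
  exact mul_pos (hg i) (pow_pos (((hSc i).notMem_iff_infDist_pos hne).1 hi) 2)

end WeightedDistSq

section Coercivity

variable {E : Type*} [NormedAddCommGroup E] [NormedSpace ℝ E] {g : ℕ → ℝ} {T : ℕ → Set E}

theorem weightedDistSq_smul_of_cone (hT : ∀ i, ∀ r : ℝ, 0 < r → r • T i = T i) {r : ℝ}
    (hr : 0 < r) (y : E) : weightedDistSq g T (r • y) = r ^ 2 * weightedDistSq g T y := by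
  rw [weightedDistSq, weightedDistSq, ← tsum_mul_left]
  congr 1 with i
  have hscale := infDist_smul₀ hr.ne' (T i) y
  rw [hT i r hr, Real.norm_of_nonneg hr.le] at hscale
  rw [hscale]
  ring

variable [ProperSpace E]

theorem exists_pos_mul_norm_sq_le_weightedDistSq (hg : ∀ i, 0 < g i) (hg' : Summable g)
    (hT0 : ∀ i, (0 : E) ∈ T i) (hTc : ∀ i, IsClosed (T i))
    (hT : ∀ i, ∀ r : ℝ, 0 < r → r • T i = T i) (hT_inter : (⋂ i, T i) ⊆ {0}) :
    ∃ c > 0, ∀ x, c * ‖x‖ ^ 2 ≤ weightedDistSq g T x := by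
  have hT0' : ∀ i, ∃ y ∈ T i, ‖y‖ ≤ 0 := fun i => ⟨0, hT0 i, norm_zero.le⟩
  -- by homogeneity it suffices to bound `weightedDistSq g T` below on the unit sphere
  obtain ⟨c, hc, hcG⟩ := (isCompact_sphere (0 : E) 1).exists_forall_le'
    (continuous_weightedDistSq (fun i => (hg i).le) hg' hT0').continuousOn
    (a := 0) fun y hy => weightedDistSq_pos hg hg' hT0' hTc fun hy0 => by
      simp [mem_singleton_iff.1 (hT_inter hy0)] at hy
  refine ⟨c, hc, fun x => ?_⟩
  rcases eq_or_ne x 0 with rfl | hx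
  · rw [norm_zero, zero_pow two_ne_zero, mul_zero]
    exact tsum_nonneg fun i => mul_nonneg (hg i).le (sq_nonneg _)
  have hxn : 0 < ‖x‖ := norm_pos_iff.2 hx
  have hunit : ‖x‖⁻¹ • x ∈ sphere (0 : E) 1 := by
    rw [mem_sphere_zero_iff_norm, norm_smul, norm_inv, norm_norm, inv_mul_cancel₀ hxn.ne']
  calc c * ‖x‖ ^ 2 ≤ ‖x‖ ^ 2 * weightedDistSq g T (‖x‖⁻¹ • x) := by
        rw [mul_comm]; gcongr; exact hcG _ hunit
    _ = weightedDistSq g T x := by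
        rw [← weightedDistSq_smul_of_cone hT hxn, smul_smul, mul_inv_cancel₀ hxn.ne', one_smul]

theorem exists_forall_weightedDistSq_le {S : ℕ → Set E} {M : ℝ} (hg : ∀ i, 0 < g i)
    (hg1 : HasSum g 1) (hT0 : ∀ i, (0 : E) ∈ T i) (hTc : ∀ i, IsClosed (T i))
    (hT : ∀ i, ∀ r : ℝ, 0 < r → r • T i = T i) (hT_inter : (⋂ i, T i) ⊆ {0})
    (hS : ∀ i, ∃ y ∈ S i, ‖y‖ ≤ M) (hST : ∀ i x, infDist x (T i) ≤ infDist x (S i) + M) :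
    ∃ x, ∀ y, weightedDistSq g S x ≤ weightedDistSq g S y := by
  obtain ⟨c, hc, hcT⟩ :=
    exists_pos_mul_norm_sq_le_weightedDistSq hg hg1.summable hT0 hTc hT hT_inter
  have hT0' : ∀ i, ∃ y ∈ T i, ‖y‖ ≤ 0 := fun i => ⟨0, hT0 i, norm_zero.le⟩
  have hlower : ∀ x, c / 2 * ‖x‖ ^ 2 + -M ^ 2 ≤ weightedDistSq g S x := fun x => by
    have hT_sum : HasSum (fun i => g i * (infDist x (T i) ^ 2 / 2 - M ^ 2))
        (weightedDistSq g T x / 2 - M ^ 2) := by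
      simpa [mul_sub, mul_div_assoc'] using
        ((hasSum_weightedDistSq (fun i => (hg i).le) hg1.summable hT0' x).div_const
          2).sub (hg1.mul_right (M ^ 2))
    refine le_trans ?_ (hasSum_le (fun i => ?_) hT_sum
      (hasSum_weightedDistSq (fun i => (hg i).le) hg1.summable hS x))
    · linarith [hcT x]
    · gcongr
      · exact (hg i).le
      nlinarith [mul_self_le_mul_self infDist_nonneg (hST i x), sq_nonneg (infDist x (S i) - M)]
  refine (continuous_weightedDistSq (fun i => (hg i).le) hg1.summable hS).exists_forall_le
    (tendsto_atTop_mono hlower (tendsto_atTop_add_const_right _ _ ?_))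
  exact ((tendsto_pow_atTop two_ne_zero).comp tendsto_norm_cocompact_atTop).const_mul_atTop
    (half_pos hc)

end Coercivity

section Balance

variable {E : Type*} [NormedAddCommGroup E] [InnerProductSpace ℝ E] {g : ℕ → ℝ}
  {S : ℕ → Set E} {M : ℝ} {x : E} {w : ℕ → E}

theorem eq_zero_of_forall_two_inner_add_norm_sq_nonneg {V : E}
    (h : ∀ u, 0 ≤ 2 * inner ℝ V u + ‖u‖ ^ 2) : V = 0 := by
  have hV := h (-V)
  rw [inner_neg_right, real_inner_self_eq_norm_sq, norm_neg] at hV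
  exact norm_eq_zero.1 (by nlinarith [norm_nonneg V])

theorem hasSum_smul_sub_eq_zero_of_forall_le [CompleteSpace E] (hg : ∀ i, 0 ≤ g i)
    (hg1 : HasSum g 1) (hS : ∀ i, ∃ y ∈ S i, ‖y‖ ≤ M)
    (hx : ∀ y, weightedDistSq g S x ≤ weightedDistSq g S y)
    (hwS : ∀ i, w i ∈ S i) (hw : ∀ i, dist x (w i) = infDist x (S i)) :
    HasSum (fun i => g i • (x - w i)) 0 := by
  have hsum : Summable fun i => g i • (x - w i) := by
    refine .of_norm_bounded (hg1.summable.mul_right (‖x‖ + M)) fun i => ?_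
    rw [norm_smul, Real.norm_of_nonneg (hg i), ← dist_eq_norm, hw]
    exact mul_le_mul_of_nonneg_left (infDist_le_norm_add (hS i) x) (hg i)
  set V := ∑' i, g i • (x - w i)
  suffices V = 0 from this ▸ hsum.hasSum
  refine eq_zero_of_forall_two_inner_add_norm_sq_nonneg fun u => ?_
  have hinner : HasSum (fun i => 2 * inner ℝ (g i • (x - w i)) u) (2 * inner ℝ V u) := by
    simpa only [innerSL_apply_apply, real_inner_comm u] using
      ((innerSL ℝ u).hasSum hsum.hasSum).mul_left 2
  -- keeping the nearest points `w i` fixed while moving `x` gives a quadratic upper bound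
  have hupper :
      weightedDistSq g S (x + u) ≤ weightedDistSq g S x + (2 * inner ℝ V u + ‖u‖ ^ 2) := by
    refine hasSum_le (fun i => ?_) (hasSum_weightedDistSq hg hg1.summable hS (x + u))
      ((hasSum_weightedDistSq_of_nearest hg hg1.summable hS hw).add
        (hinner.add (by simpa only [one_mul] using hg1.mul_right (‖u‖ ^ 2))))
    have hdist : infDist (x + u) (S i) ≤ ‖(x - w i) + u‖ := by
      have h := infDist_le_dist_of_mem (x := x + u) (hwS i)
      rwa [dist_eq_norm, show x + u - w i = x - w i + u by abel] at h
    rw [real_inner_smul_left]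
    calc g i * infDist (x + u) (S i) ^ 2 ≤ g i * ‖(x - w i) + u‖ ^ 2 := by
          gcongr
          · exact hg i
          · exact infDist_nonneg
      _ = _ := by rw [norm_add_sq_real]; ring
  linarith [hx (x + u)]

end Balance

theorem exists_fnormals_balanced {E : Type*} [NormedAddCommGroup E] [InnerProductSpace ℝ E]
    [ProperSpace E] {g : ℕ → ℝ} {S : ℕ → Set E} {M : ℝ} {x : E} (hg : ∀ i, 0 < g i)
    (hg1 : HasSum g 1) (hS : ∀ i, ∃ y ∈ S i, ‖y‖ ≤ M) (hSc : ∀ i, IsClosed (S i))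
    (hS_inter : (⋂ i, S i) = ∅) (hx : ∀ y, weightedDistSq g S x ≤ weightedDistSq g S y) :
    ∃ w b : ℕ → E, (∀ i, w i ∈ S i ∧ b i ∈ fnormal (S i) (w i)) ∧
      HasSum (fun i => g i • b i) 0 ∧ HasSum (fun i => g i * ‖b i‖ ^ 2) 1 := by
  choose w hwS hw using fun i =>
    (hSc i).exists_infDist_eq_dist (let ⟨y, hy, _⟩ := hS i; ⟨y, hy⟩) x
  have hpos : 0 < weightedDistSq g S x :=
    weightedDistSq_pos hg hg1.summable hS hSc (by simp [hS_inter])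
  have hσ : 0 < (√(weightedDistSq g S x))⁻¹ := by positivity
  refine ⟨w, fun i => (√(weightedDistSq g S x))⁻¹ • (x - w i), fun i => ⟨hwS i, ?_⟩, ?_, ?_⟩
  · refine smul_mem_fnormal (sub_mem_fnormal_of_isMinOn (isMinOn_iff.2 fun y hy => ?_)) hσ
    exact hw i ▸ infDist_le_dist_of_mem hy
  · simpa only [smul_zero, smul_comm _ (g _)] using
      (hasSum_smul_sub_eq_zero_of_forall_le (fun i => (hg i).le) hg1 hS hx hwS
        fun i => (hw i).symm).const_smul (√(weightedDistSq g S x))⁻¹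
  · have hsum := (hasSum_weightedDistSq_of_nearest (fun i => (hg i).le) hg1.summable hS
      fun i => (hw i).symm).mul_left (weightedDistSq g S x)⁻¹
    rw [inv_mul_cancel₀ hpos.ne'] at hsum
    refine hsum.congr_fun fun i => ?_
    rw [norm_smul, Real.norm_of_nonneg hσ.le, mul_pow, inv_pow, Real.sq_sqrt hpos.le]
    ring

/-- **Tangential extremal principle** (Theorem 2.1).  If a countable system of closed
sets in `ℝⁿ` is tangentially extremal at `xb` and the tangent cones intersect only at
the origin, then there are normal vectors `x*ᵢ ∈ N(0;T(xb;Ωᵢ)) ⊆ N(xb;Ωᵢ)` with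
`∑ 2⁻ⁱ x*ᵢ = 0` and `∑ 2⁻ⁱ ‖x*ᵢ‖² = 1`. -/
theorem tangential_extremal_principle {n : ℕ}
    (Ω : ℕ → Set (EuclideanSpace ℝ (Fin n))) (xb : EuclideanSpace ℝ (Fin n))
    (hcl : ∀ i, IsClosed (Ω i)) (hxb : ∀ i, xb ∈ Ω i)
    (a : ℕ → EuclideanSpace ℝ (Fin n)) (M : ℝ) (hbdd : ∀ i, ‖a i‖ ≤ M)
    (htext : (⋂ i, ((fun v => v - a i) '' tcone (Ω i) xb)) = ∅)
    (hnonover : (⋂ i, tcone (Ω i) xb) = {0}) :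
    ∃ xs : ℕ → EuclideanSpace ℝ (Fin n),
      (∀ i, xs i ∈ lnormal (tcone (Ω i) xb) 0 ∧ xs i ∈ lnormal (Ω i) xb) ∧
      Tendsto (fun m => ∑ i ∈ Finset.range m, ((1/2 : ℝ) ^ (i + 1)) • xs i)
        atTop (nhds 0) ∧
      Tendsto (fun m => ∑ i ∈ Finset.range m, ((1/2 : ℝ) ^ (i + 1)) * ‖xs i‖ ^ 2)
        atTop (nhds 1) := by
  have hg1 : HasSum (fun i : ℕ => (1/2 : ℝ) ^ (i + 1)) 1 := by
    simpa [pow_succ] using hasSum_geometric_two.mul_right (1/2 : ℝ)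
  have hg : ∀ i : ℕ, 0 < (1/2 : ℝ) ^ (i + 1) := fun i => by positivity
  have hcone : ∀ i, ∀ r : ℝ, 0 < r → r • tcone (Ω i) xb = tcone (Ω i) xb :=
    fun i r hr => smul_tcone hr
  have hS : ∀ i, ∃ y ∈ (· - a i) '' tcone (Ω i) xb, ‖y‖ ≤ M :=
    fun i => ⟨0 - a i, mem_image_of_mem _ (zero_mem_tcone (hxb i)), by simpa using hbdd i⟩
  obtain ⟨x, hx⟩ := exists_forall_weightedDistSq_le hg hg1 (fun i => zero_mem_tcone (hxb i))
    (fun i => isClosed_tcone _ _) hcone hnonover.subset hS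
    fun i => infDist_le_infDist_image_sub_add (hbdd i)
  obtain ⟨w, b, hwb, hsum, hnorm⟩ := exists_fnormals_balanced hg hg1 hS
    (fun i => (Homeomorph.subRight (a i)).isClosedMap _ (isClosed_tcone _ _)) htext hx
  refine ⟨b, fun i => ?_, hsum.tendsto_sum_nat, hnorm.tendsto_sum_nat⟩
  obtain ⟨⟨p, hp, hpw⟩, hb⟩ := hwb i
  rw [← hpw] at hb
  have hb' := mem_fnormal_of_mem_fnormal_image_sub hb
  exact ⟨mem_lnormal_zero_of_mem_fnormal (hcone i) hp hb',
    mem_lnormal_of_mem_fnormal_tcone (hcl i) (hxb i) hp hb'⟩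
end

section
/- Let {Ω_i}_{i∈ℕ} be a countable system of convex sets in ℝⁿ and let x̄ ∈ ∩_{i=1}^∞ Ω_i. Then the following are equivalent: (a) the system has the CHIP at x̄, i.e., T(x̄; ∩_{i=1}^∞ Ω_i) = ∩_{i=1}^∞ T(x̄;Ω_i); (b) the system has the asymptotic strong CHIP at x̄, i.e., N(x̄; ∩_{i=1}^∞ Ω_i) = cl co ∪_{i=1}^∞ N(x̄;Ω_i). In particular, the strong CHIP, namely N(x̄; ∩_{i=1}^∞ Ω_i) = {Σ_{i∈I} x*_i | x*_i ∈ N(x̄;Ω_i), I a finite subset of ℕ}, implies the CHIP. -/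
/-!
For a convex set `Ω ∋ x̄` the tangent cone `T(x̄; Ω)` is the closure of the cone of feasible
directions `{v | x̄ + r v ∈ Ω for some r > 0}`, whose polar is `N(x̄; Ω)`; by the bipolar theorem
`T` and `N` are polar to each other. Polarity turns unions into intersections and does not see
closed convex hulls, so the polar of `cl co ⋃ N(x̄; Ωᵢ)` is `⋂ T(x̄; Ωᵢ)`; since `cl co ⋃ N(x̄; Ωᵢ)`
is a closed convex cone, it is in turn the polar of `⋂ T(x̄; Ωᵢ)`. Thus both the CHIP and the
asymptotic strong CHIP say that `N(x̄; ⋂ Ωᵢ)` and `⋂ T(x̄; Ωᵢ)` are polar to each other. The set of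
finite sums of the `N(x̄; Ωᵢ)` also has polar `⋂ T(x̄; Ωᵢ)`, which gives the last claim.
-/

open Filter Topology Set Metric

open scoped RealInnerProductSpace Pointwise

section FeasibleCone

variable {E : Type*} [NormedAddCommGroup E] [NormedSpace ℝ E] {Ω : Set E} {x v : E}

def feasibleCone (Ω : Set E) (x : E) : ConvexCone ℝ E := ConvexCone.hull ℝ (-x +ᵥ Ω)

theorem mem_feasibleCone (hΩ : Convex ℝ Ω) :
    v ∈ feasibleCone Ω x ↔ ∃ r : ℝ, 0 < r ∧ x + r • v ∈ Ω := by
  simp only [feasibleCone, ConvexCone.mem_hull_of_convex (hΩ.vadd (-x))]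
  have key : ∀ r : ℝ, 0 < r → (v ∈ r • (-x +ᵥ Ω) ↔ x + r⁻¹ • v ∈ Ω) := fun r hr => by
    rw [mem_smul_set_iff_inv_smul_mem₀ hr.ne', mem_vadd_set_iff_neg_vadd_mem, neg_neg,
      vadd_eq_add]
  constructor
  · rintro ⟨r, hr, hv⟩
    exact ⟨r⁻¹, inv_pos.2 hr, (key r hr).1 hv⟩
  · rintro ⟨r, hr, hv⟩
    exact ⟨r⁻¹, inv_pos.2 hr, (key _ (inv_pos.2 hr)).2 (by rwa [inv_inv])⟩

theorem feasibleCone_pointed (hΩ : Convex ℝ Ω) (hx : x ∈ Ω) : (feasibleCone Ω x).Pointed :=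
  (mem_feasibleCone hΩ).2 ⟨1, one_pos, by rwa [smul_zero, add_zero]⟩

theorem tcone_subset_closure_feasibleCone (hΩ : Convex ℝ Ω) :
    tcone Ω x ⊆ closure (feasibleCone Ω x) := by
  rintro v ⟨t, w, ht, -, hw, hmem⟩
  exact mem_closure_of_tendsto hw (.of_forall fun k => (mem_feasibleCone hΩ).2 ⟨t k, ht k, hmem k⟩)

theorem closure_feasibleCone_subset_tcone (hΩ : Convex ℝ Ω) (hx : x ∈ Ω) :
    closure (feasibleCone Ω x) ⊆ tcone Ω x := by
  intro v hv
  obtain ⟨w, hwK, hw⟩ := mem_closure_iff_seq_limit.1 hv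
  choose r hr hrw using fun k => (mem_feasibleCone hΩ).1 (hwK k)
  refine ⟨fun k => min (r k) (1 / (k + 1)), w, fun k => lt_min (hr k) Nat.one_div_pos_of_nat,
    ?_, hw, fun k => ?_⟩
  · exact squeeze_zero (fun k => (lt_min (hr k) Nat.one_div_pos_of_nat).le)
      (fun k => min_le_right _ _) tendsto_one_div_add_atTop_nhds_zero_nat
  · have hs : min (r k) (1 / (k + 1)) / r k ∈ Icc (0 : ℝ) 1 :=
      ⟨div_nonneg (lt_min (hr k) Nat.one_div_pos_of_nat).le (hr k).le,
        div_le_one_of_le₀ (min_le_left _ _) (hr k).le⟩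
    simpa [smul_smul, div_mul_cancel₀ _ (hr k).ne'] using hΩ.add_smul_mem hx (hrw k) hs

theorem tcone_eq_closure_feasibleCone (hΩ : Convex ℝ Ω) (hx : x ∈ Ω) :
    tcone Ω x = closure (feasibleCone Ω x) :=
  (tcone_subset_closure_feasibleCone hΩ).antisymm (closure_feasibleCone_subset_tcone hΩ hx)

end FeasibleCone

theorem coe_hull_convexHull {V : Type*} [AddCommGroup V] [Module ℝ V] {S : Set V}
    (hS : ∀ r : ℝ, 0 < r → r • S ⊆ S) :
    (ConvexCone.hull ℝ (convexHull ℝ S) : Set V) = convexHull ℝ S := by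
  ext v
  rw [SetLike.mem_coe, ConvexCone.mem_hull_of_convex (convex_convexHull ℝ S)]
  constructor
  · rintro ⟨r, hr, hv⟩
    rw [← convexHull_smul] at hv
    exact convexHull_mono (hS r hr) hv
  · exact fun hv => ⟨1, one_pos, by rwa [one_smul]⟩

section Polar

variable {H : Type*} [NormedAddCommGroup H] [InnerProductSpace ℝ H]

def polarCone (S : Set H) : Set H := {v | ∀ u ∈ S, ⟪u, v⟫ ≤ 0}

theorem polarCone_anti {S T : Set H} (h : S ⊆ T) : polarCone T ⊆ polarCone S :=
  fun _ hv u hu => hv u (h hu)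

theorem polarCone_closure (S : Set H) : polarCone (closure S) = polarCone S := by
  refine (polarCone_anti subset_closure).antisymm fun v hv u hu => ?_
  exact closure_minimal (t := {u | ⟪u, v⟫ ≤ 0}) hv (isClosed_le (by fun_prop) (by fun_prop)) hu

theorem polarCone_convexHull (S : Set H) : polarCone (convexHull ℝ S) = polarCone S := by
  refine (polarCone_anti (subset_convexHull ℝ S)).antisymm fun v hv u hu => ?_
  exact convexHull_min hv (convex_halfSpace_le (innerₗ H |>.flip v).isLinear 0) hu

theorem polarCone_iUnion {ι : Sort*} (S : ι → Set H) :
    polarCone (⋃ i, S i) = ⋂ i, polarCone (S i) := by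
  ext v
  simp only [polarCone, mem_iInter, mem_ofPred_eq, mem_iUnion]
  exact ⟨fun h i u hu => h u ⟨i, hu⟩, fun h u ⟨i, hu⟩ => h i u hu⟩

theorem polarCone_finSums (N : ℕ → Set H) : polarCone (finSums N) = ⋂ i, polarCone (N i) := by
  ext v
  simp only [mem_iInter]
  constructor
  · intro hv i u hu
    exact hv u ⟨{i}, fun _ => u, by simpa using hu, by simp⟩
  · rintro hv _ ⟨I, u, hu, rfl⟩
    rw [sum_inner]
    exact Finset.sum_nonpos fun i hi => hv i (u i) (hu i hi)

theorem polarCone_neg [CompleteSpace H] (S : Set H) : polarCone (-S) = ProperCone.innerDual S := by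
  ext v
  simp [polarCone, inner_neg_left]

theorem neg_polarCone [CompleteSpace H] (S : Set H) : -polarCone S = ProperCone.innerDual S := by
  ext v
  simp [polarCone, inner_neg_right]

theorem ConvexCone.polarCone_polarCone [CompleteSpace H] (K : ConvexCone ℝ H) (hK : K.Pointed) :
    polarCone (polarCone K) = closure (K : Set H) := by
  let C : ProperCone ℝ H := Submodule.closure (K.toPointedCone hK)
  have hC : (C : Set H) = closure (K : Set H) := rfl
  rw [← polarCone_closure (K : Set H), ← hC, ← neg_neg (polarCone (C : Set H)), neg_polarCone,
    polarCone_neg, ProperCone.innerDual_innerDual]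

theorem polarCone_polarCone_of_smul_subset [CompleteSpace H] {S : Set H} (h0 : (0 : H) ∈ S)
    (hS : ∀ r : ℝ, 0 < r → r • S ⊆ S) :
    polarCone (polarCone S) = closure (convexHull ℝ S) := by
  rw [← polarCone_convexHull S, ← coe_hull_convexHull hS, ConvexCone.polarCone_polarCone]
  exact ConvexCone.subset_hull (subset_convexHull ℝ S h0)

variable {Ω : Set H} {x : H}

theorem zero_mem_cnormal : (0 : H) ∈ cnormal Ω x := fun y _ => by rw [inner_zero_left]

theorem smul_cnormal_subset {r : ℝ} (hr : 0 ≤ r) : r • cnormal Ω x ⊆ cnormal Ω x := by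
  rintro _ ⟨v, hv, rfl⟩ y hy
  rw [real_inner_smul_left]
  exact mul_nonpos_of_nonneg_of_nonpos hr (hv y hy)

theorem polarCone_feasibleCone (hΩ : Convex ℝ Ω) : polarCone (feasibleCone Ω x) = cnormal Ω x := by
  ext v
  constructor
  · intro hv y hy
    rw [real_inner_comm]
    exact hv _ ((mem_feasibleCone hΩ).2 ⟨1, one_pos, by rwa [one_smul, add_sub_cancel]⟩)
  · intro hv u hu
    obtain ⟨r, hr, hru⟩ := (mem_feasibleCone hΩ).1 hu
    have := hv _ hru
    rw [add_sub_cancel_left, real_inner_smul_right, real_inner_comm] at this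
    exact nonpos_of_mul_nonpos_right this hr

theorem cnormal_eq_polarCone_tcone (hΩ : Convex ℝ Ω) (hx : x ∈ Ω) :
    cnormal Ω x = polarCone (tcone Ω x) := by
  rw [tcone_eq_closure_feasibleCone hΩ hx, polarCone_closure, polarCone_feasibleCone hΩ]

theorem tcone_eq_polarCone_cnormal [CompleteSpace H] (hΩ : Convex ℝ Ω) (hx : x ∈ Ω) :
    tcone Ω x = polarCone (cnormal Ω x) := by
  rw [tcone_eq_closure_feasibleCone hΩ hx,
    ← ConvexCone.polarCone_polarCone _ (feasibleCone_pointed hΩ hx), polarCone_feasibleCone hΩ]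

end Polar

/-- **Characterization of CHIP for countable intersections of convex sets** (Theorem 3.2).
For convex sets, the CHIP is equivalent to the asymptotic strong CHIP; in particular
the strong CHIP implies the CHIP. -/
theorem CHIP_characterization_convex {n : ℕ}
    (Ω : ℕ → Set (EuclideanSpace ℝ (Fin n)))
    (hconv : ∀ i, Convex ℝ (Ω i))
    (xb : EuclideanSpace ℝ (Fin n)) (hxb : ∀ i, xb ∈ Ω i) :
    ((tcone (⋂ i, Ω i) xb = ⋂ i, tcone (Ω i) xb) ↔
      (cnormal (⋂ i, Ω i) xb = closure (convexHull ℝ (⋃ i, cnormal (Ω i) xb)))) ∧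
    ((cnormal (⋂ i, Ω i) xb = finSums fun i => cnormal (Ω i) xb) →
      tcone (⋂ i, Ω i) xb = ⋂ i, tcone (Ω i) xb) := by
  have hconvI := convex_iInter hconv
  have hxI := mem_iInter.2 hxb
  have hT : ∀ i, tcone (Ω i) xb = polarCone (cnormal (Ω i) xb) :=
    fun i => tcone_eq_polarCone_cnormal (hconv i) (hxb i)
  have hpolar_iUnion : polarCone (⋃ i, cnormal (Ω i) xb) = ⋂ i, tcone (Ω i) xb := by
    rw [polarCone_iUnion, iInter_congr fun i => (hT i).symm]
  have hbipolar : polarCone (polarCone (⋃ i, cnormal (Ω i) xb)) =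
      closure (convexHull ℝ (⋃ i, cnormal (Ω i) xb)) :=
    polarCone_polarCone_of_smul_subset (mem_iUnion.2 ⟨0, zero_mem_cnormal⟩) fun r hr => by
      rw [smul_set_iUnion]
      exact iUnion_mono fun i => smul_cnormal_subset hr.le
  refine ⟨⟨fun hCHIP => ?_, fun hCHIP => ?_⟩, fun hstrong => ?_⟩
  · rw [cnormal_eq_polarCone_tcone hconvI hxI, hCHIP, ← hpolar_iUnion, hbipolar]
  · rw [tcone_eq_polarCone_cnormal hconvI hxI, hCHIP, polarCone_closure, polarCone_convexHull,
      hpolar_iUnion]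
  · rw [tcone_eq_polarCone_cnormal hconvI hxI, hstrong, polarCone_finSums,
      iInter_congr fun i => (hT i).symm]
end

section
/- Let {Ω_i}_{i∈ℕ} be a countable system of closed sets in ℝⁿ with Ω := ∩_{i=1}^∞ Ω_i and x̄ ∈ Ω. Assume the family of distance functions {d_{Ω_i}}_{i∈ℕ} is equi-directionally differentiable at x̄ and that there exist C > 0, an index j ∈ ℕ, and a neighborhood U of x̄ such that dist(x;Ω) ≤ C sup_{i≠j} dist(x;Ω_i) for all x ∈ Ω_j ∩ U. Then the system {Ω_i}_{i∈ℕ} satisfies the CHIP at x̄, i.e., T(x̄; ∩_{i=1}^∞ Ω_i) = ∩_{i=1}^∞ T(x̄;Ω_i). -/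
open Filter Topology Set Metric

/-!
A vector `v` is tangent to a nonempty set `s` at `x` iff `d(x + t v, s) ≤ ε t` for arbitrarily
small `t > 0`, for every `ε > 0`. If `h` is tangent to every `Ωᵢ`, the directional derivatives
`d'_{Ωᵢ}(x̄; h)` therefore vanish, and equi-directional differentiability makes `x̄ + t h` lie
`o(t)`-close to all the `Ωᵢ` uniformly in `i`. An approximate nearest point of `x̄ + t h` in `Ω_j`
is then in `U` and still `o(t)`-close to every `Ωᵢ`, so linear regularity puts it, and hence
`x̄ + t h`, `o(t)`-close to `Ω`; thus `h ∈ T(x̄; Ω)`.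
-/

section TangentCone

variable {E : Type*} [NormedAddCommGroup E] [NormedSpace ℝ E] {s : Set E} {x v : E}

theorem tcone_mono {t : Set E} (hst : s ⊆ t) : tcone s x ⊆ tcone t x :=
  fun _ ⟨τ, w, hτ, hτ0, hw, hmem⟩ => ⟨τ, w, hτ, hτ0, hw, fun k => hst (hmem k)⟩

theorem tcone_iInter_subset {ι : Sort*} (s : ι → Set E) :
    tcone (⋂ i, s i) x ⊆ ⋂ i, tcone (s i) x :=
  subset_iInter fun i => tcone_mono (iInter_subset s i)

theorem mem_tcone_of_dist_le {τ e : ℕ → ℝ} {u : ℕ → E} (hτ : ∀ k, 0 < τ k)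
    (hτ0 : Tendsto τ atTop (𝓝 0)) (he : Tendsto e atTop (𝓝 0)) (hu : ∀ k, u k ∈ s)
    (hdist : ∀ k, dist (x + τ k • v) (u k) ≤ e k * τ k) : v ∈ tcone s x := by
  refine ⟨τ, fun k => (τ k)⁻¹ • (u k - x), hτ, hτ0, ?_, fun k => ?_⟩
  · refine tendsto_iff_dist_tendsto_zero.2 (squeeze_zero (fun _ => dist_nonneg) (fun k => ?_) he)
    have hτk := (hτ k).ne'
    calc dist ((τ k)⁻¹ • (u k - x)) v = (τ k)⁻¹ * dist (x + τ k • v) (u k) := by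
          rw [← inv_smul_smul₀ hτk v, dist_smul₀, Real.norm_of_nonneg (inv_nonneg.2 (hτ k).le),
            smul_inv_smul₀ hτk, dist_eq_norm, dist_eq_norm, ← norm_neg]
          congr 2
          abel
      _ ≤ e k := by rw [inv_mul_le_iff₀ (hτ k), mul_comm]; exact hdist k
  · simpa [smul_inv_smul₀ (hτ k).ne'] using hu k

theorem mem_tcone_iff_frequently_infDist_le (hs : s.Nonempty) :
    v ∈ tcone s x ↔ ∀ ε > 0, ∃ᶠ t in 𝓝[>] (0 : ℝ), infDist (x + t • v) s ≤ ε * t := by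
  constructor
  · rintro ⟨τ, w, hτ, hτ0, hw, hmem⟩ ε hε
    have hτ' : Tendsto τ atTop (𝓝[>] 0) :=
      tendsto_nhdsWithin_iff.2 ⟨hτ0, Eventually.of_forall hτ⟩
    refine hτ'.frequently (Eventually.frequently ?_)
    filter_upwards [hw.eventually (closedBall_mem_nhds v hε)] with k hk
    calc infDist (x + τ k • v) s ≤ dist (x + τ k • v) (x + τ k • w k) :=
          infDist_le_dist_of_mem (hmem k)
      _ = τ k * dist v (w k) := by
          rw [dist_add_left, dist_smul₀, Real.norm_of_nonneg (hτ k).le]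
      _ ≤ ε * τ k := by
          rw [mul_comm]
          exact mul_le_mul_of_nonneg_right (dist_comm v (w k) ▸ hk) (hτ k).le
  · intro h
    have hk : ∀ k : ℕ, ∃ τ : ℝ, 0 < τ ∧ τ < 1 / ((k : ℝ) + 1) ∧
        ∃ u ∈ s, dist (x + τ • v) u ≤ 1 / (k + 1) * τ := by
      intro k
      obtain ⟨τ, hτs, hτk⟩ := ((h (1 / (k + 2)) (by positivity)).and_eventually
        (Ioo_mem_nhdsGT (show (0 : ℝ) < 1 / (k + 1) by positivity))).exists
      have hlt : 1 / ((k : ℝ) + 2) * τ < 1 / (k + 1) * τ :=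
        mul_lt_mul_of_pos_right (one_div_lt_one_div_of_lt (by positivity) (by linarith)) hτk.1
      obtain ⟨u, hu, hdist⟩ := (infDist_lt_iff hs).1 (hτs.trans_lt hlt)
      exact ⟨τ, hτk.1, hτk.2, u, hu, hdist.le⟩
    choose τ hτ hτk u hu hdist using hk
    have hk0 : Tendsto (fun k : ℕ => 1 / ((k : ℝ) + 1)) atTop (𝓝 0) :=
      tendsto_one_div_add_atTop_nhds_zero_nat
    exact mem_tcone_of_dist_le hτ (squeeze_zero (fun k => (hτ k).le) (fun k => (hτk k).le) hk0)
      hk0 hu hdist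

end TangentCone

theorem TendstoUniformly.eventually_forall_le_of_frequently_le {α ι : Type*} {F : α → ι → ℝ}
    {d : ι → ℝ} {l : Filter α} (hF : TendstoUniformly F d l)
    (hfreq : ∀ i, ∀ ε > 0, ∃ᶠ a in l, F a i ≤ ε) {ε : ℝ} (hε : 0 < ε) :
    ∀ᶠ a in l, ∀ i, F a i ≤ ε := by
  have hd : ∀ i, d i ≤ 0 := fun i =>
    le_of_forall_pos_le_add fun δ hδ => by
      simpa using le_of_tendsto_of_frequently (hF.tendsto_at i) (hfreq i δ hδ)
  filter_upwards [Metric.tendstoUniformly_iff.1 hF ε hε] with a ha i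
  have hai := ha i
  rw [Real.dist_eq, abs_sub_lt_iff] at hai
  linarith [hd i]

theorem tendstoUniformly_nhdsGT_zero_of_forall_abs_sub_le {ι : Type*} {F : ℝ → ι → ℝ}
    {d : ι → ℝ} (h : ∀ ε > 0, ∃ δ > 0, ∀ t, 0 < t → t < δ → ∀ i, |F t i - d i| ≤ ε) :
    TendstoUniformly F d (𝓝[>] 0) := by
  refine Metric.tendstoUniformly_iff.2 fun ε hε => ?_
  obtain ⟨δ, hδ, hδF⟩ := h (ε / 2) (half_pos hε)
  filter_upwards [Ioo_mem_nhdsGT hδ] with t ht i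
  rw [dist_comm, Real.dist_eq]
  exact (hδF t ht.1 ht.2 i).trans_lt (half_lt_self hε)

theorem eventually_forall_infDist_le_of_tendstoUniformly {E ι : Type*} [NormedAddCommGroup E]
    [NormedSpace ℝ E] {Ω : ι → Set E} {x v : E} {d : ι → ℝ} (hne : ∀ i, (Ω i).Nonempty)
    (hd : TendstoUniformly (fun t i => infDist (x + t • v) (Ω i) / t) d (𝓝[>] 0))
    (hv : ∀ i, v ∈ tcone (Ω i) x) :
    ∀ ε > 0, ∀ᶠ t in 𝓝[>] (0 : ℝ), ∀ i, infDist (x + t • v) (Ω i) ≤ ε * t := by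
  intro ε hε
  have hpos : ∀ᶠ t in 𝓝[>] (0 : ℝ), 0 < t := self_mem_nhdsWithin
  have hfreq : ∀ i, ∀ δ > 0, ∃ᶠ t in 𝓝[>] (0 : ℝ), infDist (x + t • v) (Ω i) / t ≤ δ :=
    fun i δ hδ => (((mem_tcone_iff_frequently_infDist_le (hne i)).1 (hv i) δ hδ).and_eventually
      hpos).mono fun t ⟨hle, ht⟩ => (div_le_iff₀ ht).2 hle
  filter_upwards [hd.eventually_forall_le_of_frequently_le hfreq hε, hpos] with t hle ht i
  exact (div_le_iff₀ ht).1 (hle i)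

section LinearRegularity

variable {X ι : Type*} [PseudoMetricSpace X] {Ω : ι → Set X} {j : ι} {C : ℝ}

theorem infDist_iInter_le_of_dist_le (hC : 0 ≤ C) {y z : X} {η : ℝ}
    (hreg : infDist y (⋂ i, Ω i) ≤ C * ⨆ i : {k // k ≠ j}, infDist y (Ω i))
    (hzy : dist z y ≤ η) (hz : ∀ i, infDist z (Ω i) ≤ η) :
    infDist z (⋂ i, Ω i) ≤ (2 * C + 1) * η := by
  have hsup : ⨆ i : {k // k ≠ j}, infDist y (Ω i) ≤ 2 * η := by
    refine Real.iSup_le (fun i => ?_) (by linarith [dist_nonneg.trans hzy])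
    linarith [infDist_le_infDist_add_dist (x := y) (y := z) (s := Ω i), hz i, dist_comm y z]
  calc infDist z (⋂ i, Ω i) ≤ infDist y (⋂ i, Ω i) + dist z y := infDist_le_infDist_add_dist
    _ ≤ C * (2 * η) + η := by gcongr; exact hreg.trans (by gcongr)
    _ = (2 * C + 1) * η := by ring

theorem eventually_infDist_iInter_le (hC : 0 ≤ C) {x : X} (hx : x ∈ Ω j) {U : Set X}
    (hU : U ∈ 𝓝 x)
    (hreg : ∀ y ∈ Ω j ∩ U, infDist y (⋂ i, Ω i) ≤ C * ⨆ i : {k // k ≠ j}, infDist y (Ω i)) :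
    ∀ᶠ p : X × ℝ in 𝓝 (x, 0), 0 < p.2 → (∀ i, infDist p.1 (Ω i) ≤ p.2) →
      infDist p.1 (⋂ i, Ω i) ≤ (2 * C + 1) * (2 * p.2) := by
  obtain ⟨r, hr, hrU⟩ := Metric.mem_nhds_iff.1 hU
  have hlim : Tendsto (fun p : X × ℝ => dist p.1 x + 2 * p.2) (𝓝 (x, 0)) (𝓝 0) := by
    have hcont : Continuous fun p : X × ℝ => dist p.1 x + 2 * p.2 := by fun_prop
    simpa using hcont.tendsto (x, 0)
  filter_upwards [hlim.eventually (gt_mem_nhds hr)] with ⟨z, η⟩ hzη hη hz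
  obtain ⟨y, hyΩ, hzy⟩ := (infDist_lt_iff ⟨x, hx⟩).1 ((hz j).trans_lt (by linarith : η < 2 * η))
  have hyU : y ∈ U := hrU <| by
    rw [mem_ball]
    linarith [dist_triangle y z x, dist_comm y z]
  exact infDist_iInter_le_of_dist_le hC (hreg y ⟨hyΩ, hyU⟩) hzy.le fun i => by linarith [hz i]

end LinearRegularity

theorem CHIP_from_simplified_linear_regularity_general {n : ℕ}
    (Ω : ℕ → Set (EuclideanSpace ℝ (Fin n))) (xb : EuclideanSpace ℝ (Fin n))
    (hxb : ∀ i, xb ∈ Ω i)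
    (hequi : ∀ h : EuclideanSpace ℝ (Fin n), ∃ d : ℕ → ℝ, ∀ ε > 0, ∃ δ > 0,
      ∀ t : ℝ, 0 < t → t < δ → ∀ i, |infDist (xb + t • h) (Ω i) / t - d i| ≤ ε)
    (C : ℝ) (hC : 0 < C) (j : ℕ) (U : Set (EuclideanSpace ℝ (Fin n))) (hU : U ∈ nhds xb)
    (hreg : ∀ x ∈ Ω j ∩ U,
      infDist x (⋂ i, Ω i) ≤ C * ⨆ i : {k : ℕ // k ≠ j}, infDist x (Ω i)) :
    tcone (⋂ i, Ω i) xb = ⋂ i, tcone (Ω i) xb := by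
  refine Subset.antisymm (tcone_iInter_subset Ω) fun h hh => ?_
  obtain ⟨d, hd⟩ := hequi h
  have hsmall := eventually_forall_infDist_le_of_tendstoUniformly (fun i => ⟨xb, hxb i⟩)
    (tendstoUniformly_nhdsGT_zero_of_forall_abs_sub_le hd) (mem_iInter.1 hh)
  have hnear := eventually_infDist_iInter_le hC.le (hxb j) hU hreg
  rw [mem_tcone_iff_frequently_infDist_le ⟨xb, mem_iInter.2 hxb⟩]
  intro ε hε
  set η := ε / (2 * (2 * C + 1))
  have hlim : Tendsto (fun t : ℝ => (xb + t • h, η * t)) (𝓝[>] 0) (𝓝 (xb, 0)) := by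
    have hcont : Continuous fun t : ℝ => (xb + t • h, η * t) := by fun_prop
    simpa using (hcont.tendsto 0).mono_left nhdsWithin_le_nhds
  refine (((hsmall η (by positivity)).and (hlim.eventually hnear)).and
    self_mem_nhdsWithin).frequently.mono ?_
  rintro t ⟨⟨hΩ, hnear_t⟩, ht⟩
  calc infDist (xb + t • h) (⋂ i, Ω i) ≤ (2 * C + 1) * (2 * (η * t)) :=
        hnear_t (by positivity) hΩ
    _ = ε * t := by simp only [η]; field_simp

/-- **CHIP via simplified linear regularity** (Corollary 3.6). -/
theorem CHIP_from_simplified_linear_regularity {n : ℕ}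
    (Ω : ℕ → Set (EuclideanSpace ℝ (Fin n))) (xb : EuclideanSpace ℝ (Fin n))
    (hcl : ∀ i, IsClosed (Ω i)) (hxb : ∀ i, xb ∈ Ω i)
    (hequi : ∀ h : EuclideanSpace ℝ (Fin n), ∃ d : ℕ → ℝ, ∀ ε > 0, ∃ δ > 0,
      ∀ t : ℝ, 0 < t → t < δ → ∀ i, |infDist (xb + t • h) (Ω i) / t - d i| ≤ ε)
    (C : ℝ) (hC : 0 < C) (j : ℕ) (U : Set (EuclideanSpace ℝ (Fin n))) (hU : U ∈ nhds xb)
    (hreg : ∀ x ∈ Ω j ∩ U,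
      infDist x (⋂ i, Ω i) ≤ C * ⨆ i : {k : ℕ // k ≠ j}, infDist x (Ω i)) :
    tcone (⋂ i, Ω i) xb = ⋂ i, tcone (Ω i) xb :=
  CHIP_from_simplified_linear_regularity_general Ω xb hxb hequi C hC j U hU hreg
end

section
/- Let A ⊆ ℝⁿ be a set of invex type, i.e., A = ℝⁿ ∖ ∪_{t∈T} A_t where each A_t is an open convex set, and let x̄ ∈ (∩_{t∈T} bd A_t) ∩ bd A belong to the boundary of A and of each A_t. Then x̄ + T(x̄;A) ⊆ A, where T(x̄;A) is the contingent tangent cone to A at x̄. -/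
open Filter Topology Set Metric

/-! If `x̄ + v` lay in some `A_t`, then, `A_t` being open and convex with `x̄` in its closure,
`x̄ + τ w ∈ A_t` for every `τ ∈ (0, 1]` and every `w` close to `v`; along a tangent sequence this
puts the points `x̄ + t_k w_k ∈ A ⊆ A_tᶜ` inside `A_t`. -/

section TangentCone
variable {E : Type*} [NormedAddCommGroup E] [NormedSpace ℝ E]

theorem tcone_mono_s7 {Ω Ω' : Set E} (h : Ω ⊆ Ω') (x : E) : tcone Ω x ⊆ tcone Ω' x := by
  rintro v ⟨t, w, ht, ht0, hw, hmem⟩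
  exact ⟨t, w, ht, ht0, hw, fun k => h (hmem k)⟩

theorem Convex.add_notMem_of_mem_tcone_compl {C : Set E} (hC : Convex ℝ C) (hCo : IsOpen C)
    {x v : E} (hx : x ∈ closure C) (hv : v ∈ tcone Cᶜ x) : x + v ∉ C := by
  intro hxv
  obtain ⟨t, w, ht, ht0, hw, hmem⟩ := hv
  have ht_le_one : ∀ᶠ k in atTop, t k ≤ 1 := ht0.eventually (eventually_le_nhds one_pos)
  have hw_mem : ∀ᶠ k in atTop, x + w k ∈ C :=
    (tendsto_const_nhds.add hw).eventually (hCo.mem_nhds hxv)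
  obtain ⟨k, hk1, hkC⟩ := (ht_le_one.and hw_mem).exists
  have hseg : x + t k • w k ∈ interior C :=
    hC.add_smul_mem_interior' hx (by rwa [hCo.interior_eq]) ⟨ht k, hk1⟩
  exact hmem k (interior_subset hseg)

end TangentCone

theorem invex_type_tangent_inclusion_general {n : ℕ} {T : Type*}
    (A : Set (EuclideanSpace ℝ (Fin n))) (At : T → Set (EuclideanSpace ℝ (Fin n)))
    (hopen : ∀ t, IsOpen (At t)) (hconv : ∀ t, Convex ℝ (At t))
    (hA : A = (⋃ t, At t)ᶜ)
    (xb : EuclideanSpace ℝ (Fin n))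
    (hbd : ∀ t, xb ∈ frontier (At t)) :
    ∀ v ∈ tcone A xb, xb + v ∈ A := by
  intro v hv
  rw [hA, mem_compl_iff, mem_iUnion]
  rintro ⟨t, ht⟩
  have hA_sub : A ⊆ (At t)ᶜ := hA ▸ compl_subset_compl.2 (subset_iUnion At t)
  exact (hconv t).add_notMem_of_mem_tcone_compl (hopen t) (hbd t).1 (tcone_mono_s7 hA_sub xb hv) ht

/-- **Sets of invex type** (Lemma 3.8).  If `A = ℝⁿ ∖ ⋃_{t∈T} A_t` with each `A_t`
open and convex, and `x̄` belongs to the boundary of `A` and of every `A_t`, then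
`x̄ + T(x̄;A) ⊆ A`. -/
theorem invex_type_tangent_inclusion {n : ℕ} {T : Type*}
    (A : Set (EuclideanSpace ℝ (Fin n))) (At : T → Set (EuclideanSpace ℝ (Fin n)))
    (hopen : ∀ t, IsOpen (At t)) (hconv : ∀ t, Convex ℝ (At t))
    (hA : A = (⋃ t, At t)ᶜ)
    (xb : EuclideanSpace ℝ (Fin n))
    (hbd : ∀ t, xb ∈ frontier (At t)) (hbdA : xb ∈ frontier A) :
    ∀ v ∈ tcone A xb, xb + v ∈ A :=
  invex_type_tangent_inclusion_general A At hopen hconv hA xb hbd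
end

section
/- Let {Ω_i}_{i∈ℕ} be a countable system of convex sets in ℝⁿ for which there exists an index i₀ ∈ ℕ with Ω_{i₀} ∩ ∩_{i≠i₀} int Ω_i ≠ ∅. Then the normal qualification condition holds at every x̄ ∈ ∩_{i=1}^∞ Ω_i: whenever x*_i ∈ N(x̄;Ω_i) for all i ∈ ℕ and the series Σ_{i=1}^∞ x*_i converges to 0, then x*_i = 0 for all i ∈ ℕ. -/
open Filter Topology Set Metric

/-! Take `z ∈ Ω_{i₀}` lying in the interior of every other `Ωᵢ`. The numbers
`⟪x*ᵢ, x̄ - z⟫` are nonnegative and sum to `⟪∑ x*ᵢ, x̄ - z⟫ = 0`, so they all vanish.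
Hence each `x*ᵢ` is also normal to `Ωᵢ` at `z`, which forces `x*ᵢ = 0` for `i ≠ i₀`
because `z` is interior there. The series then reduces to its single term `x*_{i₀}`,
which must be `0` as well. -/

section ConvexNormal

variable {E : Type*} [NormedAddCommGroup E] [InnerProductSpace ℝ E]

theorem mem_cnormal_of_inner_sub_eq_zero {Ω : Set E} {x z v : E} (hv : v ∈ cnormal Ω x)
    (h : inner ℝ v (z - x) = 0) : v ∈ cnormal Ω z := by
  intro y hy
  calc inner ℝ v (y - z) = inner ℝ v (y - x) - inner ℝ v (z - x) := by
        rw [← inner_sub_right, sub_sub_sub_cancel_right]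
    _ ≤ 0 := by simpa [h] using hv y hy

theorem eq_zero_of_mem_cnormal_of_mem_interior {Ω : Set E} {z v : E} (hz : z ∈ interior Ω)
    (hv : v ∈ cnormal Ω z) : v = 0 := by
  have hnear : ∀ᶠ t : ℝ in 𝓝 0, z + t • v ∈ Ω := by
    have hcont : Tendsto (fun t : ℝ => z + t • v) (𝓝 0) (𝓝 z) := by
      simpa using ((continuous_id.smul continuous_const).const_add z).tendsto (0 : ℝ)
    exact hcont.eventually (mem_interior_iff_mem_nhds.mp hz)
  obtain ⟨t, ht, htΩ⟩ :=
    ((eventually_mem_nhdsWithin (s := Ioi (0 : ℝ)) (a := 0)).and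
      (nhdsWithin_le_nhds hnear)).exists
  have h : t * inner ℝ v v ≤ 0 := by
    simpa [real_inner_smul_right] using hv _ htΩ
  exact real_inner_self_nonpos.mp (nonpos_of_mul_nonpos_right h ht)

end ConvexNormal

theorem eq_zero_of_nonneg_of_tendsto_sum_range {a : ℕ → ℝ} (ha : ∀ i, 0 ≤ a i)
    (h : Tendsto (fun m => ∑ i ∈ Finset.range m, a i) atTop (𝓝 0)) : a = 0 :=
  (hasSum_zero_iff_of_nonneg ha).mp ((hasSum_iff_tendsto_nat_of_nonneg ha 0).mpr h)

theorem NQC_convex_sets_general {n : ℕ}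
    (Ω : ℕ → Set (EuclideanSpace ℝ (Fin n)))
    (i₀ : ℕ) (hne : (Ω i₀ ∩ ⋂ i ∈ {k : ℕ | k ≠ i₀}, interior (Ω i)).Nonempty)
    (xb : EuclideanSpace ℝ (Fin n))
    (xs : ℕ → EuclideanSpace ℝ (Fin n)) (hxs : ∀ i, xs i ∈ cnormal (Ω i) xb)
    (hsum : Tendsto (fun m => ∑ i ∈ Finset.range m, xs i) atTop (nhds 0)) :
    ∀ i, xs i = 0 := by
  obtain ⟨z, hz₀, hz⟩ := hne
  have hz_int : ∀ i ≠ i₀, z ∈ interior (Ω i) := fun i hi => mem_iInter₂.mp hz i hi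
  have hzΩ : ∀ i, z ∈ Ω i := fun i => by
    rcases eq_or_ne i i₀ with rfl | hi
    exacts [hz₀, interior_subset (hz_int i hi)]
  have hb_nonneg : ∀ i, 0 ≤ inner ℝ (xs i) (xb - z) := fun i => by
    have h := hxs i z (hzΩ i)
    rw [← neg_sub, inner_neg_right] at h
    linarith
  have hb_sum :
      Tendsto (fun m => ∑ i ∈ Finset.range m, inner ℝ (xs i) (xb - z)) atTop (𝓝 0) := by
    simpa [sum_inner] using hsum.inner (tendsto_const_nhds (x := xb - z))
  have hb_zero : ∀ i, inner ℝ (xs i) (xb - z) = 0 :=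
    congrFun (eq_zero_of_nonneg_of_tendsto_sum_range hb_nonneg hb_sum)
  have hne₀ : ∀ i ≠ i₀, xs i = 0 := fun i hi =>
    eq_zero_of_mem_cnormal_of_mem_interior (hz_int i hi) <|
      mem_cnormal_of_inner_sub_eq_zero (hxs i) <| by
        rw [← neg_sub, inner_neg_right, hb_zero, neg_zero]
  have hi₀ : xs i₀ = 0 := tendsto_nhds_unique (hasSum_single i₀ hne₀).tendsto_sum_nat hsum
  intro i
  rcases eq_or_ne i i₀ with rfl | hi
  exacts [hi₀, hne₀ i hi]

/-- **NQC for countable systems of convex sets** (Proposition 3.11).  If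
`Ω_{i₀} ∩ ⋂_{i≠i₀} int Ωᵢ ≠ ∅`, then the normal qualification condition holds at every
common point: normals `x*ᵢ ∈ N(x̄;Ωᵢ)` whose series converges to `0` must all vanish. -/
theorem NQC_convex_sets {n : ℕ}
    (Ω : ℕ → Set (EuclideanSpace ℝ (Fin n))) (hconv : ∀ i, Convex ℝ (Ω i))
    (i₀ : ℕ) (hne : (Ω i₀ ∩ ⋂ i ∈ {k : ℕ | k ≠ i₀}, interior (Ω i)).Nonempty)
    (xb : EuclideanSpace ℝ (Fin n)) (hxb : ∀ i, xb ∈ Ω i)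
    (xs : ℕ → EuclideanSpace ℝ (Fin n)) (hxs : ∀ i, xs i ∈ cnormal (Ω i) xb)
    (hsum : Tendsto (fun m => ∑ i ∈ Finset.range m, xs i) atTop (nhds 0)) :
    ∀ i, xs i = 0 :=
  NQC_convex_sets_general Ω i₀ hne xb xs hxs hsum
end
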